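/- Self-consistency of BH: every j in the BH rejection set S satisfies p_j ≤ α|S|/m, and conversely {j : p_j ≤ α|S|/m} = S, i.e., the BH rejection set is a fixed point of the map R ↦ {j : p_j ≤ α|R|/m}. -/

import Mathlib

/-- The k-th order statistic `p_(k)` of the p-values (1-indexed). -/
noncomputable def orderStat {m : ℕ} (p : Fin m → ℝ) (k : ℕ) : ℝ :=
  (Multiset.sort (Multiset.map p Finset.univ.val) (· ≤ ·)).getD (k - 1) 0

/-- `k* = max{k ∈ [m] : p_(k) ≤ α k / m}`, with `max ∅ = 0`. -/
noncomputable def kstar {m : ℕ} (p : Fin m → ℝ) (α : ℝ) : ℕ :=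
  sSup {k | k ∈ Finset.Icc 1 m ∧ orderStat p k ≤ α * k / m}

/-- The Benjamini–Hochberg rejection set `S = {j : p_j ≤ α k*/m}`. -/
noncomputable def BH {m : ℕ} (p : Fin m → ℝ) (α : ℝ) : Finset (Fin m) :=
  Finset.univ.filter (fun j => p j ≤ α * (kstar p α) / m)

/-! With `c t = #{j | p j ≤ t}`, sortedness gives `p_(k) ≤ t ↔ k ≤ c t`, so `|S| = c (α k*/m) ≥ k*`.
If this were strict, then `k* + 1 ≤ c (α k*/m) ≤ c (α (k*+1)/m)` because `α ≥ 0`, and `k* + 1`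
would pass the BH test, contradicting the maximality of `k*`. Hence `|S| = k*`, and both claims
reduce to the definition of `S`. -/

open Finset

theorem List.Pairwise.getElem_le_iff_lt_countP {α : Type*} [LinearOrder α] {L : List α}
    (hL : L.Pairwise (· ≤ ·)) {i : ℕ} (hi : i < L.length) (t : α) :
    L[i] ≤ t ↔ i < L.countP (· ≤ t) := by
  induction L generalizing i with
  | nil => simp at hi
  | cons a L ih =>
    obtain ⟨ha, hL⟩ := List.pairwise_cons.mp hL
    by_cases hat : a ≤ t
    · cases i with
      | zero => simp [hat]
      | succ i => simpa [hat] using ih hL (by simpa using hi)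
    · have hgt : ∀ b ∈ a :: L, t < b := by
        intro b hb
        rcases List.mem_cons.mp hb with rfl | hb
        exacts [not_le.mp hat, (not_le.mp hat).trans_le (ha b hb)]
      have hcount : (a :: L).countP (· ≤ t) = 0 :=
        List.countP_eq_zero.mpr fun b hb => by simpa using hgt b hb
      simp [hcount, hgt _ (List.getElem_mem hi)]

theorem card_filter_le_eq_countP_sort {ι α : Type*} [Fintype ι] [LinearOrder α] (p : ι → α)
    (t : α) :
    #{j | p j ≤ t} = (Multiset.sort (Multiset.map p univ.val) (· ≤ ·)).countP (· ≤ t) := by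
  rw [← Multiset.coe_countP, Multiset.sort_eq, Multiset.countP_map, card_def, filter_val]

theorem orderStat_le_iff {m : ℕ} (p : Fin m → ℝ) {k : ℕ} (hk : k ∈ Icc 1 m) (t : ℝ) :
    orderStat p k ≤ t ↔ k ≤ #{j | p j ≤ t} := by
  rw [mem_Icc] at hk
  have hlen : k - 1 < (Multiset.sort (Multiset.map p univ.val) (· ≤ ·)).length := by
    rw [Multiset.length_sort, Multiset.card_map, ← card_def, card_fin]
    omega
  rw [orderStat, List.getD_eq_getElem _ _ hlen,
    (Multiset.pairwise_sort _ _).getElem_le_iff_lt_countP hlen, card_filter_le_eq_countP_sort]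
  omega

theorem le_kstar_of_orderStat_le {m : ℕ} {p : Fin m → ℝ} {α : ℝ} {k : ℕ} (hk : k ∈ Icc 1 m)
    (hpk : orderStat p k ≤ α * k / m) : k ≤ kstar p α :=
  le_csSup ⟨m, fun _ hk' => (mem_Icc.mp hk'.1).2⟩ ⟨hk, hpk⟩

theorem kstar_eq_zero_or_mem {m : ℕ} (p : Fin m → ℝ) (α : ℝ) :
    kstar p α = 0 ∨ (kstar p α ∈ Icc 1 m ∧ orderStat p (kstar p α) ≤ α * kstar p α / m) := by
  rcases Set.eq_empty_or_nonempty {k | k ∈ Icc 1 m ∧ orderStat p k ≤ α * k / m} with h | h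
  · left
    rw [kstar, h, csSup_empty, Nat.bot_eq_zero]
  · exact Or.inr (Nat.sSup_mem h ⟨m, fun _ hk => (mem_Icc.mp hk.1).2⟩)

theorem card_BH {m : ℕ} (p : Fin m → ℝ) {α : ℝ} (hα : 0 ≤ α) : #(BH p α) = kstar p α := by
  set K := kstar p α
  have hK_le : K ≤ #(BH p α) := by
    rcases kstar_eq_zero_or_mem p α with h | ⟨hK, hpK⟩
    · exact h.trans_le (Nat.zero_le _)
    · exact (orderStat_le_iff p hK _).mp hpK
  refine le_antisymm (not_lt.mp fun hlt => ?_) hK_le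
  have hK1 : K + 1 ∈ Icc 1 m :=
    mem_Icc.mpr ⟨K.succ_pos, hlt.trans_le ((card_le_univ _).trans_eq (Fintype.card_fin m))⟩
  have hmono : #(BH p α) ≤ #{j | p j ≤ α * ↑(K + 1) / m} := by
    refine card_le_card (monotone_filter_right _ fun j _ hj => hj.trans ?_)
    gcongr
    exact_mod_cast K.le_succ
  have hmax := le_kstar_of_orderStat_le hK1 ((orderStat_le_iff p hK1 _).mpr (hlt.trans_le hmono))
  omega

theorem BH_self_consistent_general {m : ℕ} (p : Fin m → ℝ) (α : ℝ)
    (hα : α ∈ Set.Ioo (0 : ℝ) 1) :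
    (∀ j ∈ BH p α, p j ≤ α * (BH p α).card / m) ∧
    Finset.univ.filter (fun j => p j ≤ α * (BH p α).card / m) = BH p α := by
  rw [card_BH p hα.1.le]
  exact ⟨fun j hj => (mem_filter.mp hj).2, rfl⟩

/-- Self-consistency of BH: every `j ∈ S` satisfies `p_j ≤ α|S|/m`, and conversely
`{j : p_j ≤ α|S|/m} = S`, i.e. `S` is a fixed point of `R ↦ {j : p_j ≤ α|R|/m}`. -/
theorem BH_self_consistent {m : ℕ} (p : Fin m → ℝ) (α : ℝ)
    (hp : ∀ j, p j ∈ Set.Icc (0 : ℝ) 1) (hα : α ∈ Set.Ioo (0 : ℝ) 1) :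
    (∀ j ∈ BH p α, p j ≤ α * (BH p α).card / m) ∧
    Finset.univ.filter (fun j => p j ≤ α * (BH p α).card / m) = BH p α :=
  BH_self_consistent_general p α hα
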